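/- For every integer k ≥ 1, the number f(2k+1) of worst-case permutations on the path P_{2k+1} satisfies the recurrence f(2k+1) = 4k·f(2k−1) + (4k² − 2k) · Σ_{j=1}^{k−1} C(2k−2, 2j−1) · f(2j−1) · f(2k−2j−1), where C(a,b) denotes the binomial coefficient and the empty sum (for k = 1) is 0, with f(1) = 1. -/

import Mathlib

/-!
Vertices are numbered from `0`, so the vertices `0, 2, …, 2k` of `P (2k+1)` called even below are
the paper's odd vertices `1, 3, …, 2k+1`.

The algorithm always outputs an independent set, and an independent set of `P (2k+1)` containing an
odd vertex has at most `k` elements. Hence `π` is worst-case iff its output is the set of the `k+1`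
even vertices, iff every odd vertex is revealed after one of its neighbours.

Count these orders by their first vertex, necessarily an even vertex `2j`. Its neighbours (one or
two) are then unconstrained, and the other vertices form the paths `0, …, 2j-2` and
`2j+2, …, 2k`, of lengths `2j-1` and `2k-2j-1`, with no odd vertex of one adjacent to the other.
An admissible order is thus a choice of positions for the three groups and an admissible order of
each: `2k · f(2k-1)` orders for `j = 0` and for `j = k`, and
`2k(2k-1) · C(2k-2, 2j-1) · f(2j-1) · f(2k-2j-1)` for each `0 < j < k`.
-/

/- The path graph `P n` on `Fin n`: vertex `v` represents the label `v + 1 ∈ {1, ..., n}`,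
   and consecutive labels are adjacent. -/
def pathGraph (n : ℕ) : SimpleGraph (Fin n) where
  Adj i j := (i : ℕ) + 1 = j ∨ (j : ℕ) + 1 = i
  symm := ⟨fun i j h => h.symm⟩
  loopless := ⟨by intro i h; omega⟩

open Classical in
noncomputable def domList {V : Type*} [DecidableEq V] (G : SimpleGraph V) (l : List V) : Finset V :=
  l.foldl (fun D v => if ∃ w ∈ D, G.Adj w v then D else insert v D) ∅

noncomputable def GammaSet (n : ℕ) (π : Equiv.Perm (Fin n)) : Finset (Fin n) :=
  domList (pathGraph n) (List.ofFn fun i => π i)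

noncomputable def gamma (n : ℕ) (π : Equiv.Perm (Fin n)) : ℕ := (GammaSet n π).card

/- `(n + 1) / 2 = ⌈n/2⌉`, the largest possible value of `γ`. -/
noncomputable def f (n : ℕ) : ℕ :=
  Nat.card {π : Equiv.Perm (Fin n) // gamma n π = (n + 1) / 2}

open Finset

section OnlineDomination

variable {V : Type*} [DecidableEq V] (G : SimpleGraph V)

open Classical in
noncomputable def domStep (D : Finset V) (v : V) : Finset V :=
  if ∃ w ∈ D, G.Adj w v then D else insert v D

variable {G}

theorem domList_eq_foldl (l : List V) : domList G l = l.foldl (domStep G) ∅ := rfl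

theorem mem_foldl_domStep_iff_of_notMem {v : V} {l : List V} (hv : v ∉ l) (D : Finset V) :
    v ∈ l.foldl (domStep G) D ↔ v ∈ D := by
  induction l generalizing D with
  | nil => rfl
  | cons a l ih =>
    rw [List.mem_cons, not_or] at hv
    rw [List.foldl_cons, ih hv.2]
    unfold domStep
    split_ifs <;> simp [hv.1]

theorem mem_domStep_self_iff {D : Finset V} {v : V} (hv : v ∉ D) :
    v ∈ domStep G D v ↔ ∀ w ∈ D, ¬G.Adj w v := by
  unfold domStep
  split_ifs with h
  · simpa [hv] using h
  · simpa using h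

theorem mem_or_mem_of_mem_foldl_domStep {v : V} {l : List V} {D : Finset V}
    (h : v ∈ l.foldl (domStep G) D) : v ∈ D ∨ v ∈ l := by
  induction l generalizing D with
  | nil => exact .inl h
  | cons a l ih =>
    rcases ih h with h | h
    · unfold domStep at h
      split_ifs at h
      · exact .inl h
      · rcases mem_insert.mp h with rfl | h
        · exact .inr List.mem_cons_self
        · exact .inl h
    · exact .inr (List.mem_cons_of_mem a h)

theorem mem_domList_append_cons_iff {l₁ l₂ : List V} {v : V}
    (hl : (l₁ ++ v :: l₂).Nodup) :
    v ∈ domList G (l₁ ++ v :: l₂) ↔ ∀ w ∈ l₁, G.Adj w v → w ∉ domList G (l₁ ++ v :: l₂) := by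
  obtain ⟨-, hv, hdisj⟩ := List.nodup_append.mp hl
  have hprefix : ∀ w ∈ l₁,
      w ∈ domList G (l₁ ++ v :: l₂) ↔ w ∈ l₁.foldl (domStep G) ∅ := fun w hw => by
    rw [domList_eq_foldl, List.foldl_append]
    exact mem_foldl_domStep_iff_of_notMem (hdisj w hw w · rfl) _
  have hv₁ : v ∉ l₁.foldl (domStep G) ∅ := fun h =>
    hdisj v ((mem_or_mem_of_mem_foldl_domStep h).resolve_left (by simp)) v List.mem_cons_self rfl
  calc v ∈ domList G (l₁ ++ v :: l₂) ↔ v ∈ domStep G (l₁.foldl (domStep G) ∅) v := by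
        rw [domList_eq_foldl, List.foldl_append, List.foldl_cons,
          mem_foldl_domStep_iff_of_notMem (List.nodup_cons.mp hv).1]
    _ ↔ ∀ w ∈ l₁, G.Adj w v → w ∉ l₁.foldl (domStep G) ∅ := by
        rw [mem_domStep_self_iff hv₁]
        exact ⟨fun h w _ hadj hw => h w hw hadj, fun h w hw hadj =>
          h w ((mem_or_mem_of_mem_foldl_domStep hw).resolve_left (by simp)) hadj hw⟩
    _ ↔ _ := by
        refine forall₂_congr fun w hw => ?_
        rw [hprefix w hw]

theorem getElem_mem_domList_iff {l : List V} (hl : l.Nodup) {t : ℕ} (ht : t < l.length) :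
    l[t] ∈ domList G l ↔ ∀ s (hs : s < t), G.Adj l[s] l[t] → l[s] ∉ domList G l := by
  have key := mem_domList_append_cons_iff (G := G) (l₁ := l.take t) (l₂ := l.drop (t + 1))
    (v := l[t])
  rw [List.getElem_cons_drop, List.take_append_drop] at key
  rw [key hl]
  constructor
  · exact fun h s hs => h l[s] (List.mem_take_iff_getElem.mpr ⟨s, by omega, rfl⟩)
  · rintro h w hw
    obtain ⟨s, hs, rfl⟩ := List.mem_take_iff_getElem.mp hw
    exact h s (by omega)

end OnlineDomination

theorem mem_gammaSet_iff {n : ℕ} (π : Equiv.Perm (Fin n)) (t : Fin n) :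
    π t ∈ GammaSet n π ↔ ∀ s < t, (pathGraph n).Adj (π s) (π t) → π s ∉ GammaSet n π := by
  have h := getElem_mem_domList_iff (G := pathGraph n)
    (List.nodup_ofFn.mpr π.injective) (t := t) (by simp)
  simp only [List.getElem_ofFn] at h
  rw [GammaSet, h]
  exact ⟨fun h s hs => h s hs, fun h s hs => h ⟨s, by omega⟩ hs⟩

/-- The adjacency of `pathGraph`, read on labels. -/
def Consecutive (a b : ℕ) : Prop := a + 1 = b ∨ b + 1 = a

instance (a b : ℕ) : Decidable (Consecutive a b) := inferInstanceAs (Decidable (_ ∨ _))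

/-- `e` lists `α` in the order of revelation, so `e.symm v` is the time at which `v` is revealed. -/
def OddsPreceded {α : Type*} (ν : α → ℕ) {m : ℕ} (e : Fin m ≃ α) : Prop :=
  ∀ v, Odd (ν v) → ∃ u, Consecutive (ν u) (ν v) ∧ e.symm u < e.symm v

noncomputable def numOddsPreceded (n : ℕ) : ℕ :=
  Nat.card {π : Equiv.Perm (Fin n) // OddsPreceded Fin.val π}

section PathDomination

variable {n : ℕ} (π : Equiv.Perm (Fin n))

theorem isIndepSet_gammaSet : (pathGraph n).IsIndepSet (GammaSet n π : Set (Fin n)) := by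
  have key : ∀ s t, s < t → π t ∈ GammaSet n π → (pathGraph n).Adj (π s) (π t) →
      π s ∉ GammaSet n π := fun s t hst ht => (mem_gammaSet_iff π t).mp ht s hst
  intro u hu v hv hne hadj
  obtain ⟨s, rfl⟩ := π.surjective u
  obtain ⟨t, rfl⟩ := π.surjective v
  rcases lt_trichotomy s t with hst | rfl | hts
  · exact key s t hst hv hadj hu
  · exact hne rfl
  · exact key t s hts hu hadj.symm hv

theorem mem_gammaSet_of_forall_adj {v : Fin n}
    (hv : ∀ u, (pathGraph n).Adj u v → ¬π.symm u < π.symm v) : v ∈ GammaSet n π := by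
  obtain ⟨t, rfl⟩ := π.surjective v
  refine (mem_gammaSet_iff π t).mpr fun s hst hadj _ => hv (π s) hadj ?_
  simpa using hst

theorem gammaSet_eq_filter_even (hπ : OddsPreceded Fin.val π) :
    GammaSet n π = ({v | Even (v : ℕ)} : Finset (Fin n)) := by
  suffices h : ∀ t, π t ∈ GammaSet n π ↔ Even (π t : ℕ) by
    ext v
    obtain ⟨t, rfl⟩ := π.surjective v
    simpa using h t
  intro t
  induction t using WellFoundedLT.induction with
  | _ t ih =>
    rw [mem_gammaSet_iff]
    rcases Nat.even_or_odd (π t : ℕ) with heven | hodd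
    · refine iff_of_true (fun s hst hadj hs => ?_) heven
      have := (ih s hst).mp hs
      have hadj : Consecutive _ _ := hadj
      rw [Nat.even_iff] at heven this
      unfold Consecutive at hadj
      omega
    · refine iff_of_false (fun h => ?_) (Nat.not_even_iff_odd.mpr hodd)
      obtain ⟨u, hadj, hlt⟩ := hπ _ hodd
      obtain ⟨s, rfl⟩ := π.surjective u
      simp only [Equiv.symm_apply_apply] at hlt
      refine h s hlt hadj ((ih s hlt).mpr ?_)
      rw [Nat.odd_iff] at hodd
      rw [Nat.even_iff]
      unfold Consecutive at hadj
      omega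

end PathDomination

/-- Sending `x` to `⌊x/2⌋` below `v` and to `⌊(x-1)/2⌋` above `v` is injective on `D`, with values
below `k`. -/
theorem card_le_of_isIndepSet_of_odd_mem {k : ℕ} {D : Finset (Fin (2 * k + 1))}
    (hD : (pathGraph (2 * k + 1)).IsIndepSet (D : Set (Fin (2 * k + 1)))) {v : Fin (2 * k + 1)}
    (hv : v ∈ D) (hodd : Odd (v : ℕ)) : #D ≤ k := by
  have hfar : ∀ x ∈ D, ∀ y ∈ D, x ≠ y → ¬Consecutive x y := fun x hx y hy hne =>
    hD hx hy hne
  have hv₁ := hfar v hv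
  rw [Nat.odd_iff] at hodd
  let g : Fin (2 * k + 1) → ℕ := fun x => if (x : ℕ) ≤ v then x / 2 else (x - 1) / 2
  calc #D ≤ #(range k) := card_le_card_of_injOn g (fun x hx => ?_) (fun x hx y hy hxy => ?_)
    _ = k := card_range k
  · have := hv₁ x hx
    simp only [coe_range, Set.mem_Iio, g]
    unfold Consecutive at this
    split_ifs <;> omega
  · by_contra hne
    have := hfar x hx y hy hne
    have hx' := hv₁ x hx
    have hy' := hv₁ y hy
    simp only [g] at hxy
    unfold Consecutive at this hx' hy'
    split_ifs at hxy <;> omega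

theorem card_filter_even (k : ℕ) : #{v : Fin (2 * k + 1) | Even (v : ℕ)} = k + 1 := by
  rw [← card_range (k + 1)]
  refine card_nbij' (fun v => (v : ℕ) / 2) (fun i => ⟨min (2 * i) (2 * k), by omega⟩) ?_ ?_ ?_ ?_
  all_goals
    intro x hx
    simp only [coe_filter, mem_univ, true_and, Set.mem_ofPred_eq, coe_range, Set.mem_Iio,
      Nat.even_iff] at hx ⊢
  all_goals first | omega | (ext; simp only; omega)

theorem gamma_eq_iff_oddsPreceded (k : ℕ) (π : Equiv.Perm (Fin (2 * k + 1))) :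
    gamma (2 * k + 1) π = k + 1 ↔ OddsPreceded Fin.val π := by
  refine ⟨fun h => ?_, fun h => by rw [gamma, gammaSet_eq_filter_even π h, card_filter_even]⟩
  by_contra hnot
  simp only [OddsPreceded, not_forall, not_exists, not_and] at hnot
  obtain ⟨v, hodd, hv⟩ := hnot
  have := card_le_of_isIndepSet_of_odd_mem (isIndepSet_gammaSet π)
    (mem_gammaSet_of_forall_adj π hv) hodd
  rw [gamma] at h
  omega

theorem f_eq_numOddsPreceded {n : ℕ} (hn : Odd n) : f n = numOddsPreceded n := by
  obtain ⟨k, rfl⟩ := hn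
  refine Nat.card_congr (Equiv.subtypeEquivRight fun π => ?_)
  rw [show (2 * k + 1 + 1) / 2 = k + 1 by omega]
  exact gamma_eq_iff_oddsPreceded k π

section Shuffle

variable {α : Type*} (P : α → Prop) [DecidablePred P] {m : ℕ}

noncomputable def restrictOrder (e : Fin m ≃ α) {a : ℕ} (h : #{i | P (e i)} = a) :
    Fin a ≃ {v // P v} :=
  ((({i | P (e i)} : Finset (Fin m)).orderIsoOfFin h).toEquiv).trans
    (e.subtypeEquiv fun i => by simp)

variable {P}

theorem restrictOrder_apply (e : Fin m ≃ α) {a : ℕ} (h : #{i | P (e i)} = a) (x : Fin a) :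
    (restrictOrder P e h x : α) = e (({i | P (e i)} : Finset (Fin m)).orderEmbOfFin h x) := rfl

theorem restrictOrder_symm_lt_symm_iff (e : Fin m ≃ α) {a : ℕ} (h : #{i | P (e i)} = a)
    (u v : {v // P v}) :
    (restrictOrder P e h).symm u < (restrictOrder P e h).symm v ↔ e.symm u < e.symm v := by
  simp [restrictOrder]

theorem card_filter_apply_eq [Fintype α] (e : Fin m ≃ α) {a : ℕ}
    (ha : Fintype.card {v // P v} = a) :
    #{i | P (e i)} = a := by
  rw [← ha, ← Fintype.card_subtype]
  exact Fintype.card_congr (e.subtypeEquiv fun _ => Iff.rfl)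

theorem orderEmbOfFin_congr {s t : Finset (Fin m)} (hst : s = t) {a : ℕ} (hs : #s = a)
    (ht : #t = a) : s.orderEmbOfFin hs = t.orderEmbOfFin ht := by
  subst hst; rfl

variable [Fintype α] {a b : ℕ}

/-- An ordering of `α` amounts to the set of positions of the `P`-elements together with the two
induced orderings. -/
noncomputable def splitOrder (ha : Fintype.card {v // P v} = a)
    (hb : Fintype.card {v // ¬P v} = b) (e : Fin m ≃ α) :
    {s : Finset (Fin m) // #s = a} × (Fin a ≃ {v // P v}) × (Fin b ≃ {v // ¬P v}) :=
  (⟨_, card_filter_apply_eq e ha⟩, restrictOrder P e (card_filter_apply_eq e ha),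
    restrictOrder (¬P ·) e (card_filter_apply_eq e hb))

theorem splitOrder_bijective [DecidableEq α] (ha : Fintype.card {v // P v} = a)
    (hb : Fintype.card {v // ¬P v} = b) (hab : a + b = m) :
    Function.Bijective (splitOrder (m := m) ha hb) := by
  have hα : Fintype.card α = m := by
    have := Fintype.card_subtype_le P
    rw [Fintype.card_subtype_compl] at hb
    omega
  have hcompl : ∀ s : Finset (Fin m), #s = a → #sᶜ = b := fun s hs => by
    rw [card_compl, hs, Fintype.card_fin]
    omega
  let merge (t : {s : Finset (Fin m) // #s = a} × (Fin a ≃ {v // P v}) × (Fin b ≃ {v // ¬P v})) :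
      Fin m ≃ α :=
    (finSumEquivOfFinset t.1.2 (hcompl _ t.1.2)).symm.trans
      ((t.2.1.sumCongr t.2.2).trans (Equiv.sumCompl P))
  have hmerge : Function.LeftInverse merge (splitOrder ha hb) := fun e => by
    ext i
    obtain ⟨z, rfl⟩ := (finSumEquivOfFinset (card_filter_apply_eq e ha)
      (hcompl _ (card_filter_apply_eq e ha))).surjective i
    simp only [merge, splitOrder, Equiv.trans_apply, Equiv.symm_apply_apply]
    rcases z with x | y
    · rfl
    · simp only [Equiv.sumCongr_apply, Sum.map_inr, Equiv.sumCompl_apply_inr, restrictOrder_apply,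
        finSumEquivOfFinset_inr]
      rw [orderEmbOfFin_congr (compl_filter _)]
  refine (Fintype.bijective_iff_injective_and_card _).mpr ⟨hmerge.injective, ?_⟩
  rw [Fintype.card_prod, Fintype.card_prod, Fintype.card_finset_len, Fintype.card_fin,
    Fintype.card_equiv (Fintype.equivFinOfCardEq hα).symm,
    Fintype.card_equiv (Fintype.equivFinOfCardEq ha).symm,
    Fintype.card_equiv (Fintype.equivFinOfCardEq hb).symm, Fintype.card_fin, Fintype.card_fin,
    Fintype.card_fin, ← Nat.choose_mul_factorial_mul_factorial (show a ≤ m by omega),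
    show m - a = b by omega, mul_assoc]

theorem card_of_iff_restrictOrder [DecidableEq α] (ha : Fintype.card {v // P v} = a)
    (hb : Fintype.card {v // ¬P v} = b) (hab : a + b = m)
    (Q : (Fin m ≃ α) → Prop) (Q₁ : (Fin a ≃ {v // P v}) → Prop)
    (Q₂ : (Fin b ≃ {v // ¬P v}) → Prop)
    (hQ : ∀ e h₁ h₂, Q e ↔ Q₁ (restrictOrder P e h₁) ∧ Q₂ (restrictOrder (¬P ·) e h₂)) :
    Nat.card {e // Q e} = m.choose a * (Nat.card {e // Q₁ e} * Nat.card {e // Q₂ e}) :=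
  calc Nat.card {e // Q e}
      = Nat.card {t : {s : Finset (Fin m) // #s = a} × (Fin a ≃ {v // P v}) ×
          (Fin b ≃ {v // ¬P v}) // Q₁ t.2.1 ∧ Q₂ t.2.2} :=
        Nat.card_congr ((Equiv.ofBijective _ (splitOrder_bijective ha hb hab)).subtypeEquiv
          fun e => hQ e _ _)
    _ = Nat.card ({s : Finset (Fin m) // #s = a} × {e // Q₁ e} × {e // Q₂ e}) :=
        Nat.card_congr
          { toFun t := (t.1.1, ⟨t.1.2.1, t.2.1⟩, ⟨t.1.2.2, t.2.2⟩)
            invFun t := ⟨(t.1, t.2.1.1, t.2.2.1), t.2.1.2, t.2.2.2⟩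
            left_inv _ := rfl
            right_inv _ := rfl }
    _ = m.choose a * (Nat.card {e // Q₁ e} * Nat.card {e // Q₂ e}) := by
        rw [Nat.card_prod, Nat.card_prod, Nat.card_eq_fintype_card (α := {s // _}),
          Fintype.card_finset_len, Fintype.card_fin]

end Shuffle

section OddsPreceded

variable {α : Type*} {ν : α → ℕ} {m : ℕ}

theorem oddsPreceded_restrictOrder_iff {P : α → Prop} [DecidablePred P]
    (hP : ∀ u v, P v → Odd (ν v) → Consecutive (ν u) (ν v) → P u) (e : Fin m ≃ α) {a : ℕ}
    (h : #{i | P (e i)} = a) :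
    OddsPreceded (fun v : {v // P v} => ν v) (restrictOrder P e h) ↔
      ∀ v, P v → Odd (ν v) → ∃ u, Consecutive (ν u) (ν v) ∧ e.symm u < e.symm v := by
  constructor
  · intro he v hv hodd
    obtain ⟨u, hu, hlt⟩ := he ⟨v, hv⟩ hodd
    exact ⟨u, hu, (restrictOrder_symm_lt_symm_iff e h u ⟨v, hv⟩).mp hlt⟩
  · rintro he ⟨v, hv⟩ hodd
    obtain ⟨u, hu, hlt⟩ := he v hv hodd
    exact ⟨⟨u, hP u v hv hodd hu⟩, hu, (restrictOrder_symm_lt_symm_iff e h _ _).mpr hlt⟩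

theorem oddsPreceded_iff_restrictOrder (P : α → Prop) [DecidablePred P]
    (hP : ∀ u v, Odd (ν v) → Consecutive (ν u) (ν v) → (P u ↔ P v)) (e : Fin m ≃ α) {a b : ℕ}
    (h₁ : #{i | P (e i)} = a) (h₂ : #{i | ¬P (e i)} = b) :
    OddsPreceded ν e ↔ OddsPreceded (fun v : {v // P v} => ν v) (restrictOrder P e h₁) ∧
      OddsPreceded (fun v : {v // ¬P v} => ν v) (restrictOrder (¬P ·) e h₂) := by
  rw [oddsPreceded_restrictOrder_iff (fun u v hv hodd hu => (hP u v hodd hu).mpr hv),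
    oddsPreceded_restrictOrder_iff (fun u v hv hodd hu => mt (hP u v hodd hu).mp hv)]
  exact ⟨fun he => ⟨fun v _ => he v, fun v _ => he v⟩,
    fun he v => (em (P v)).elim (he.1 v) (he.2 v)⟩

theorem oddsPreceded_trans_iff {β : Type*} {ν' : β → ℕ} (r : α ≃ β) (d : ℕ)
    (hr : ∀ x, ν x = ν' (r x) + 2 * d) (e : Fin m ≃ α) :
    OddsPreceded ν' (e.trans r) ↔ OddsPreceded ν e := by
  have hodd : ∀ x, Odd (ν x) ↔ Odd (ν' (r x)) := fun x => by
    rw [hr, Nat.odd_add, iff_true_right (even_two_mul d)]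
  have hcons : ∀ x y, Consecutive (ν x) (ν y) ↔ Consecutive (ν' (r x)) (ν' (r y)) := fun x y => by
    rw [hr, hr]
    unfold Consecutive
    omega
  constructor
  · intro he v hv
    obtain ⟨u, hu, hlt⟩ := he (r v) ((hodd v).mp hv)
    obtain ⟨u, rfl⟩ := r.surjective u
    exact ⟨u, (hcons u v).mpr hu, by simpa using hlt⟩
  · intro he w hw
    obtain ⟨v, rfl⟩ := r.surjective w
    obtain ⟨u, hu, hlt⟩ := he v ((hodd v).mpr hw)
    exact ⟨r u, (hcons u v).mp hu, by simpa using hlt⟩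

theorem card_oddsPreceded_eq_of_shift {n : ℕ} (r : α ≃ Fin n) (d : ℕ)
    (hr : ∀ x, ν x = r x + 2 * d) :
    Nat.card {e : Fin n ≃ α // OddsPreceded ν e} = numOddsPreceded n :=
  Nat.card_congr <| ((Equiv.refl _).equivCongr r).subtypeEquiv fun e =>
    (oddsPreceded_trans_iff r d hr e).symm

theorem exists_equiv_fin_of_shift {n d : ℕ} (hν : Function.Injective ν)
    (hrange : ∀ y, (∃ x, ν x = y + 2 * d) ↔ y < n) (hge : ∀ x, 2 * d ≤ ν x) :
    ∃ r : α ≃ Fin n, ∀ x, ν x = r x + 2 * d := by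
  have hlt : ∀ x, ν x - 2 * d < n := fun x =>
    (hrange _).mp ⟨x, by have := hge x; omega⟩
  refine ⟨Equiv.ofBijective (fun x => ⟨ν x - 2 * d, hlt x⟩) ⟨fun x y hxy => ?_, fun y => ?_⟩,
    fun x => ?_⟩
  · have := hge x
    have := hge y
    exact hν (by simp only [Fin.mk.injEq] at hxy; omega)
  · obtain ⟨x, hx⟩ := (hrange y).mpr y.isLt
    exact ⟨x, Fin.ext (by simp [hx])⟩
  · have := hge x
    show ν x = ν x - 2 * d + 2 * d
    omega

theorem not_odd_apply_zero {e : Fin (m + 1) ≃ α} (he : OddsPreceded ν e) : ¬Odd (ν (e 0)) :=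
  fun hodd => by
    obtain ⟨u, -, hlt⟩ := he (e 0) hodd
    simp at hlt

end OddsPreceded

section FirstElement

variable {α : Type*} [DecidableEq α] {m : ℕ}

def dropFirst (c : α) : {e : Fin (m + 1) ≃ α // e 0 = c} ≃ (Fin m ≃ {v // v ≠ c}) :=
  (((finSuccEquiv m).equivCongr (Equiv.refl α)).subtypeEquiv fun e => by simp).trans
    (Equiv.optionSubtype c)

theorem dropFirst_apply (c : α) (e : {e : Fin (m + 1) ≃ α // e 0 = c}) (i : Fin m) :
    (dropFirst c e i : α) = e.1 i.succ := by
  simp [dropFirst, Equiv.optionSubtype]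

theorem dropFirst_symm_lt_symm_iff (c : α) (e : {e : Fin (m + 1) ≃ α // e 0 = c})
    (u v : {v // v ≠ c}) :
    (dropFirst c e).symm u < (dropFirst c e).symm v ↔ e.1.symm u < e.1.symm v := by
  obtain ⟨i, rfl⟩ := (dropFirst c e).surjective u
  obtain ⟨j, rfl⟩ := (dropFirst c e).surjective v
  simp [dropFirst_apply]

variable {ν : α → ℕ}

theorem oddsPreceded_iff_dropFirst {c : α} (hc : ¬Odd (ν c))
    (e : {e : Fin (m + 1) ≃ α // e 0 = c}) :
    OddsPreceded ν e.1 ↔ ∀ v : {v // v ≠ c}, ¬Consecutive (ν c) (ν v) → Odd (ν v) →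
      ∃ u : {v // v ≠ c}, Consecutive (ν u) (ν v) ∧
        (dropFirst c e).symm u < (dropFirst c e).symm v := by
  simp only [dropFirst_symm_lt_symm_iff]
  constructor
  · intro he v hv hodd
    obtain ⟨u, hu, hlt⟩ := he v hodd
    exact ⟨⟨u, by rintro rfl; exact hv hu⟩, hu, hlt⟩
  · intro he v hodd
    have hvc : v ≠ c := by rintro rfl; exact hc hodd
    by_cases hv : Consecutive (ν c) (ν v)
    · refine ⟨c, hv, ?_⟩
      rw [e.1.symm_apply_eq.mpr e.2.symm, Fin.pos_iff_ne_zero, Ne, e.1.symm_apply_eq, e.2]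
      exact hvc
    · obtain ⟨u, hu, hlt⟩ := he ⟨v, hvc⟩ hv hodd
      exact ⟨u, hu, hlt⟩

end FirstElement

theorem card_ne_eq {m : ℕ} (c : Fin (m + 1)) : Fintype.card {v // v ≠ c} = m := by
  rw [Fintype.card_subtype_compl, Fintype.card_subtype_eq, Fintype.card_fin, Nat.add_sub_cancel]

abbrev Remote {n : ℕ} (c : Fin n) : Type := {v : {v : Fin n // v ≠ c} // ¬Consecutive c v}

section RemoteVertices

variable {k j : ℕ} {c : Fin (2 * k + 1)}

theorem injective_remote_val (p : Remote c → Prop) :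
    Function.Injective fun x : {w // p w} => (x.1.1.1 : ℕ) := fun _ _ h =>
  Subtype.ext (Subtype.ext (Subtype.ext (Fin.ext h)))

theorem remote_val_ne (hc : (c : ℕ) = 2 * j) (w : Remote c) :
    (w.1.1 : ℕ) ≠ 2 * j ∧ ¬Consecutive (2 * j) w.1.1 := by
  rw [← hc]
  exact ⟨fun h => w.1.2 (Fin.ext h), w.2⟩

theorem exists_equiv_remote_lt (hc : (c : ℕ) = 2 * j) :
    ∃ r : {w : Remote c // w.1.1 < c} ≃ Fin (2 * j - 1), ∀ x, (x.1.1.1 : ℕ) = r x + 2 * 0 := by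
  refine exists_equiv_fin_of_shift (injective_remote_val _) (fun y => ⟨?_, fun hy => ?_⟩)
    (by simp)
  · rintro ⟨x, hx⟩
    have := remote_val_ne hc x.1
    have := x.2
    simp only [Consecutive, Fin.lt_def, hc] at *
    omega
  · refine ⟨⟨⟨⟨⟨y, by omega⟩, fun h => ?_⟩, ?_⟩, ?_⟩, rfl⟩
    · have := congrArg Fin.val h
      simp only [hc] at this
      omega
    · simp only [Consecutive, hc]
      omega
    · simp only [Fin.lt_def, hc]
      omega

theorem exists_equiv_remote_not_lt (hc : (c : ℕ) = 2 * j) :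
    ∃ r : {w : Remote c // ¬w.1.1 < c} ≃ Fin (2 * k - 2 * j - 1),
      ∀ x, (x.1.1.1 : ℕ) = r x + 2 * (j + 1) := by
  have hge (x : {w : Remote c // ¬w.1.1 < c}) : 2 * (j + 1) ≤ x.1.1.1 := by
    have := remote_val_ne hc x.1
    have := x.2
    simp only [Consecutive, Fin.lt_def, hc] at *
    omega
  refine exists_equiv_fin_of_shift (injective_remote_val _) (fun y => ⟨?_, fun hy => ?_⟩) hge
  · rintro ⟨x, hx⟩
    have := x.1.1.1.2
    omega
  · refine ⟨⟨⟨⟨⟨y + 2 * (j + 1), by omega⟩, fun h => ?_⟩, ?_⟩, ?_⟩, rfl⟩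
    · have := congrArg Fin.val h
      simp only [hc] at this
      omega
    · simp only [Consecutive, hc]
      omega
    · simp only [Fin.lt_def, hc]
      omega

theorem card_remote (hc : (c : ℕ) = 2 * j) :
    Fintype.card (Remote c) = 2 * j - 1 + (2 * k - 2 * j - 1) := by
  obtain ⟨rL, -⟩ := exists_equiv_remote_lt hc
  obtain ⟨rR, -⟩ := exists_equiv_remote_not_lt hc
  rw [← Fintype.card_fin (2 * j - 1), ← Fintype.card_fin (2 * k - 2 * j - 1),
    ← Fintype.card_congr rL, ← Fintype.card_congr rR,
    Fintype.card_subtype_compl fun w : Remote c => w.1.1 < c]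
  have := Fintype.card_subtype_le fun w : Remote c => w.1.1 < c
  omega

theorem card_oddsPreceded_remote (hc : (c : ℕ) = 2 * j) :
    Nat.card {e : Fin (2 * j - 1 + (2 * k - 2 * j - 1)) ≃ Remote c //
      OddsPreceded (fun w => (w.1.1 : ℕ)) e} =
      (2 * j - 1 + (2 * k - 2 * j - 1)).choose (2 * j - 1) *
        (numOddsPreceded (2 * j - 1) * numOddsPreceded (2 * k - 2 * j - 1)) := by
  obtain ⟨rL, hrL⟩ := exists_equiv_remote_lt hc
  obtain ⟨rR, hrR⟩ := exists_equiv_remote_not_lt hc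
  rw [← card_oddsPreceded_eq_of_shift rL 0 hrL, ← card_oddsPreceded_eq_of_shift rR _ hrR]
  refine card_of_iff_restrictOrder (by rw [Fintype.card_congr rL, Fintype.card_fin])
    (by rw [Fintype.card_congr rR, Fintype.card_fin]) rfl _ _ _ fun e h₁ h₂ =>
      oddsPreceded_iff_restrictOrder _ (fun u v hodd hu => ?_) e h₁ h₂
  have := remote_val_ne hc u
  have := remote_val_ne hc v
  simp only [Consecutive, Nat.odd_iff, Fin.lt_def, hc] at *
  omega

end RemoteVertices

theorem card_oddsPreceded_and_apply_zero_eq_remote {m φ : ℕ} {c : Fin (m + 1)}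
    (hc : ¬Odd (c : ℕ)) (hφ : Fintype.card {v : {v // v ≠ c} // Consecutive c v} = φ) :
    Nat.card {π : Equiv.Perm (Fin (m + 1)) // OddsPreceded Fin.val π ∧ π 0 = c} =
      m.descFactorial φ * Nat.card {e : Fin (m - φ) ≃ Remote c //
        OddsPreceded (fun w => (w.1.1 : ℕ)) e} := by
  have hremote : Fintype.card (Remote c) = m - φ := by
    rw [Fintype.card_subtype_compl, hφ, card_ne_eq]
  calc Nat.card {π : Equiv.Perm (Fin (m + 1)) // OddsPreceded Fin.val π ∧ π 0 = c}
      = Nat.card {e : Fin m ≃ {v // v ≠ c} // ∀ v, ¬Consecutive c v.1 → Odd (v.1 : ℕ) →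
          ∃ u : {v // v ≠ c}, Consecutive u.1 v.1 ∧ e.symm u < e.symm v} :=
        Nat.card_congr <| (Equiv.subtypeEquivRight fun _ => and_comm).trans <|
          (Equiv.subtypeSubtypeEquivSubtypeInter _ _).symm.trans <|
            (dropFirst c).subtypeEquiv (oddsPreceded_iff_dropFirst hc)
    _ = m.choose φ * (Nat.card {e : Fin φ ≃ {v : {v // v ≠ c} // Consecutive c v} // True} *
          Nat.card {e : Fin (m - φ) ≃ Remote c // OddsPreceded (fun w => (w.1.1 : ℕ)) e}) := by
        have := Fintype.card_subtype_le fun v : {v // v ≠ c} => Consecutive c v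
        rw [card_ne_eq] at this
        refine card_of_iff_restrictOrder hφ hremote (by omega) _ _ _ fun e _ h₂ => ?_
        rw [true_and]
        refine (oddsPreceded_restrictOrder_iff (ν := fun v : {v // v ≠ c} => (v.1 : ℕ))
          (fun u v _ hodd hu hcu => ?_) e h₂).symm
        rw [Nat.not_odd_iff] at hc
        rw [Nat.odd_iff] at hodd
        unfold Consecutive at hu hcu
        omega
    _ = _ := by
        rw [Nat.card_congr (Equiv.subtypeUnivEquiv fun _ => trivial), Nat.card_eq_fintype_card,
          Fintype.card_equiv (Fintype.equivFinOfCardEq hφ).symm, Fintype.card_fin,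
          Nat.descFactorial_eq_factorial_mul_choose, mul_left_comm, mul_assoc]

/-- `φ` is the number of neighbours of the first vertex `2j`. -/
theorem card_oddsPreceded_and_apply_zero_eq {k j φ : ℕ}
    (hφ : 2 * j - 1 + (2 * k - 2 * j - 1) + φ = 2 * k) :
    Nat.card {π : Equiv.Perm (Fin (2 * k + 1)) // OddsPreceded Fin.val π ∧ (π 0 : ℕ) = 2 * j} =
      (2 * k).descFactorial φ * ((2 * k - φ).choose (2 * j - 1) *
        (numOddsPreceded (2 * j - 1) * numOddsPreceded (2 * k - 2 * j - 1))) := by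
  obtain ⟨c, hc⟩ : ∃ c : Fin (2 * k + 1), (c : ℕ) = 2 * j := ⟨⟨2 * j, by omega⟩, rfl⟩
  have hfree : Fintype.card {v : {v // v ≠ c} // Consecutive c v} = φ := by
    have := card_remote hc
    rw [Fintype.card_subtype_compl, card_ne_eq] at this
    have := Fintype.card_subtype_le fun v : {v // v ≠ c} => Consecutive c v
    rw [card_ne_eq] at this
    omega
  have hcodd : ¬Odd (c : ℕ) := by rw [hc, Nat.not_odd_iff_even]; exact even_two_mul j
  rw [Nat.card_congr (Equiv.subtypeEquivRight fun π => by rw [← hc, Fin.val_inj]),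
    card_oddsPreceded_and_apply_zero_eq_remote hcodd hfree,
    show 2 * k - φ = 2 * j - 1 + (2 * k - 2 * j - 1) by omega, card_oddsPreceded_remote hc]

theorem numOddsPreceded_eq_sum (k : ℕ) :
    numOddsPreceded (2 * k + 1) = ∑ j ∈ range (k + 1), Nat.card
      {π : Equiv.Perm (Fin (2 * k + 1)) // OddsPreceded Fin.val π ∧ (π 0 : ℕ) = 2 * j} := by
  classical
  simp only [numOddsPreceded, Nat.card_eq_fintype_card, Fintype.card_subtype]
  rw [card_eq_sum_card_fiberwise (f := fun π => (π 0 : ℕ) / 2) (t := range (k + 1))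
    fun π _ => mem_range.mpr (show (π 0 : ℕ) / 2 < k + 1 by have := (π 0).isLt; omega)]
  refine sum_congr rfl fun j _ => ?_
  rw [filter_filter]
  refine congrArg card (filter_congr fun π _ => and_congr_right fun hπ => ?_)
  have := not_odd_apply_zero hπ
  rw [Nat.not_odd_iff] at this
  omega

theorem numOddsPreceded_zero : numOddsPreceded 0 = 1 := by
  rw [numOddsPreceded, Nat.card_congr (Equiv.subtypeUnivEquiv (p := OddsPreceded Fin.val)
    fun π v => v.elim0)]
  simp

theorem numOddsPreceded_one : numOddsPreceded 1 = 1 := by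
  rw [numOddsPreceded, Nat.card_congr (Equiv.subtypeUnivEquiv (p := OddsPreceded Fin.val)
    fun π v hv => ?_)]
  · simp
  · rw [Fin.fin_one_eq_zero v] at hv
    simp at hv

theorem descFactorial_two_mul_two (k : ℕ) : (2 * k).descFactorial 2 = 4 * k ^ 2 - 2 * k := by
  rw [Nat.descFactorial_eq_factorial_mul_choose, Nat.choose_two_right, Nat.factorial_two,
    Nat.mul_div_cancel' (Nat.even_mul_pred_self _).two_dvd, Nat.mul_sub, mul_one]
  ring_nf

theorem numOddsPreceded_two_mul_add_one {k : ℕ} (hk : 1 ≤ k) :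
    numOddsPreceded (2 * k + 1) = 4 * k * numOddsPreceded (2 * k - 1) +
      (4 * k ^ 2 - 2 * k) * ∑ j ∈ Icc 1 (k - 1), (2 * k - 2).choose (2 * j - 1) *
        numOddsPreceded (2 * j - 1) * numOddsPreceded (2 * k - 2 * j - 1) := by
  obtain ⟨k, rfl⟩ := Nat.exists_eq_add_of_le' hk
  have hmid : ∀ i ∈ range k, Nat.card {π : Equiv.Perm (Fin (2 * (k + 1) + 1)) //
      OddsPreceded Fin.val π ∧ (π 0 : ℕ) = 2 * (i + 1)} =
      (4 * (k + 1) ^ 2 - 2 * (k + 1)) * ((2 * (k + 1) - 2).choose (2 * (1 + i) - 1) *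
        numOddsPreceded (2 * (1 + i) - 1) * numOddsPreceded (2 * (k + 1) - 2 * (1 + i) - 1)) := by
    intro i hi
    have hi := mem_range.mp hi
    rw [card_oddsPreceded_and_apply_zero_eq (φ := 2) (by omega), add_comm i 1,
      descFactorial_two_mul_two]
    ring
  rw [numOddsPreceded_eq_sum, sum_range_succ, sum_range_succ', sum_congr rfl hmid, ← mul_sum,
    card_oddsPreceded_and_apply_zero_eq (φ := 1) (by omega),
    card_oddsPreceded_and_apply_zero_eq (φ := 1) (by omega), Nat.add_sub_cancel,
    ← Ico_add_one_right_eq_Icc, sum_Ico_eq_sum_range, Nat.add_sub_cancel]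
  simp only [Nat.descFactorial_one, Nat.mul_zero, Nat.zero_sub, Nat.sub_zero,
    Nat.choose_zero_right, Nat.choose_self, Nat.sub_self, numOddsPreceded_zero]
  ring

theorem worst_case_odd_recurrence :
    f 1 = 1 ∧
    ∀ k : ℕ, 1 ≤ k →
      f (2 * k + 1) = 4 * k * f (2 * k - 1) +
        (4 * k ^ 2 - 2 * k) *
          ∑ j ∈ Finset.Icc 1 (k - 1),
            Nat.choose (2 * k - 2) (2 * j - 1) * f (2 * j - 1) * f (2 * k - 2 * j - 1) := by
  refine ⟨by rw [f_eq_numOddsPreceded odd_one, numOddsPreceded_one], fun k hk => ?_⟩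
  have hodd : ∀ i < k, Odd (2 * k - 2 * i - 1) := fun i hi => ⟨k - i - 1, by omega⟩
  rw [f_eq_numOddsPreceded ⟨k, rfl⟩, f_eq_numOddsPreceded (by simpa using hodd 0 hk),
    numOddsPreceded_two_mul_add_one hk]
  refine congrArg _ (congrArg _ (sum_congr rfl fun j hj => ?_))
  rw [mem_Icc] at hj
  rw [f_eq_numOddsPreceded ⟨j - 1, by omega⟩, f_eq_numOddsPreceded (hodd j (by omega))]
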